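/- For π-reversible P, any orbit partition with Gibbs kernel G, and l ∈ ℕ, one has Tr((GPG)^l) = Tr(P̄^l), and consequently ‖(GPG)^l − Π‖²_{F,π} = ‖P̄^l − Π̄‖²_{F,π̄}. -/
import Mathlib


open Finset Matrix

namespace GpgStmt

noncomputable section

variable {X : Type*}

/-- Matrix with all rows equal to π. -/
def Pimat {X : Type*} (π : X → ℝ) : Matrix X X ℝ := Matrix.of fun _ y => π y

def IsStochastic [Fintype X] (P : Matrix X X ℝ) : Prop :=
  (∀ x y, 0 ≤ P x y) ∧ ∀ x, ∑ y, P x y = 1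

/-- π-stationary transition matrix. -/
def IsStationary [Fintype X] (π : X → ℝ) (P : Matrix X X ℝ) : Prop :=
  IsStochastic P ∧ ∀ y, ∑ x, π x * P x y = π y

/-- π-reversible transition matrix. -/
def IsReversible [Fintype X] (π : X → ℝ) (P : Matrix X X ℝ) : Prop :=
  IsStochastic P ∧ ∀ x y, π x * P x y = π y * P y x

/-- mass of the orbit O_i = {x | o x = i}. -/
def orbMass [Fintype X] {k : ℕ} (π : X → ℝ) (o : X → Fin k) (i : Fin k) : ℝ :=
  ∑ x ∈ Finset.filter (fun x => o x = i) Finset.univ, π x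

/-- Gibbs kernel of the orbit partition induced by o. -/
def gibbs [Fintype X] {k : ℕ} (π : X → ℝ) (o : X → Fin k) : Matrix X X ℝ :=
  Matrix.of fun x y => if o x = o y then π y / orbMass π o (o x) else 0

/-- Projection chain P̄ of P with respect to the orbit partition induced by o. -/
def projChain [Fintype X] {k : ℕ} (π : X → ℝ) (o : X → Fin k) (P : Matrix X X ℝ) :
    Matrix (Fin k) (Fin k) ℝ :=
  Matrix.of fun i j => (1 / orbMass π o i) *
    ∑ x ∈ Finset.filter (fun x => o x = i) Finset.univ,
      ∑ y ∈ Finset.filter (fun y => o y = j) Finset.univ, π x * P x y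

/-- π-weighted KL divergence between transition matrices, with 0·log(0/a) = 0. -/
def klDiv {X : Type*} [Fintype X] (π : X → ℝ) (Q R : Matrix X X ℝ) : ℝ :=
  ∑ x, ∑ y, π x * Q x y * Real.log (Q x y / R x y)

/-- ℓ²(π)-adjoint of a matrix. -/
def piAdj [Fintype X] (π : X → ℝ) (M : Matrix X X ℝ) : Matrix X X ℝ :=
  Matrix.of fun x y => π y * M y x / π x

/-- squared π-weighted Frobenius norm ‖M‖²_{F,π} = Tr(M*M). -/
def frobSq [Fintype X] (π : X → ℝ) (M : Matrix X X ℝ) : ℝ :=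
  Matrix.trace (piAdj π M * M)

/-- π-mass of a finite set. -/
def mass [Fintype X] (π : X → ℝ) (S : Finset X) : ℝ := ∑ x ∈ S, π x

/-- Two-block Gibbs kernel G_S for the partition X = S ⊔ Sᶜ. -/
def gibbsTwo [Fintype X] [DecidableEq X] (π : X → ℝ) (S : Finset X) : Matrix X X ℝ :=
  Matrix.of fun x y =>
    if x ∈ S then (if y ∈ S then π y / mass π S else 0)
    else (if y ∈ S then 0 else π y / mass π Sᶜ)

/-- g(S) = (1/(π(S)π(S'))) Σ_{x∈S,y∈S'} π(x) P²(x,y). -/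
def gfun [Fintype X] [DecidableEq X] (π : X → ℝ) (P : Matrix X X ℝ) (S : Finset X) : ℝ :=
  (1 / (mass π S * mass π Sᶜ)) * ∑ x ∈ S, ∑ y ∈ Sᶜ, π x * (P * P) x y

/-- h(S) = (1/π(S)) Σ_{x∈S,y∈S'} π(x) P²(x,y). -/
def hfun [Fintype X] [DecidableEq X] (π : X → ℝ) (P : Matrix X X ℝ) (S : Finset X) : ℝ :=
  (1 / mass π S) * ∑ x ∈ S, ∑ y ∈ Sᶜ, π x * (P * P) x y

/-- Ergodicity (primitivity): some power of P has all entries positive. -/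
def IsErgodic [Fintype X] [DecidableEq X] (P : Matrix X X ℝ) : Prop :=
  ∃ m : ℕ, ∀ x y, 0 < (P ^ m) x y

/-- Shannon entropy of π. -/
def shannonEnt [Fintype X] (π : X → ℝ) : ℝ := -∑ x, π x * Real.log (π x)

/-- Entropy rate H_π(Q). -/
def entRate [Fintype X] (π : X → ℝ) (Q : Matrix X X ℝ) : ℝ :=
  -∑ x, ∑ y, π x * Q x y * Real.log (Q x y)

/-- Supermodular set function on 2^X. -/
def Supermodular {X : Type*} [DecidableEq X] (F : Finset X → ℝ) : Prop :=
  ∀ A B : Finset X, F A + F B ≤ F (A ∩ B) + F (A ∪ B)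

/-- Submodular set function on 2^X. -/
def Submodular {X : Type*} [DecidableEq X] (F : Finset X → ℝ) : Prop :=
  ∀ A B : Finset X, F (A ∩ B) + F (A ∪ B) ≤ F A + F B

/-- lift matrix A: A x i = 1 if o x = i. -/
def Amat [Fintype X] {k : ℕ} (o : X → Fin k) : Matrix X (Fin k) ℝ :=
  Matrix.of fun x i => if o x = i then 1 else 0

/-- averaging matrix B: B i y = π y / m i on the orbit. -/
def Bmat [Fintype X] {k : ℕ} (π : X → ℝ) (o : X → Fin k) : Matrix (Fin k) X ℝ :=
  Matrix.of fun i y => if o y = i then π y / orbMass π o i else 0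

lemma orbMass_pos [Fintype X] {k : ℕ} (π : X → ℝ) (o : X → Fin k)
    (hπ : ∀ x, 0 < π x) (ho : Function.Surjective o) (i : Fin k) :
    0 < orbMass π o i := by
  obtain ⟨x, hx⟩ := ho i
  refine Finset.sum_pos' (fun y _ => (hπ y).le) ⟨x, ?_, hπ x⟩
  simp [hx]

lemma gibbs_eq_AB [Fintype X] {k : ℕ} (π : X → ℝ) (o : X → Fin k) :
    gibbs π o = Amat o * Bmat π o := by
  ext x y
  simp only [Matrix.mul_apply, Amat, Bmat, gibbs, Matrix.of_apply, ite_mul, one_mul, zero_mul]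
  rw [Finset.sum_eq_single (o x) (fun b _ hb => if_neg fun h => hb h.symm) (by simp),
    if_pos rfl]
  by_cases h : o x = o y
  · rw [if_pos h, if_pos h.symm, h]
  · rw [if_neg h, if_neg fun h' => h h'.symm]

lemma BA_eq_one [Fintype X] {k : ℕ} (π : X → ℝ) (o : X → Fin k)
    (hπ : ∀ x, 0 < π x) (ho : Function.Surjective o) :
    Bmat π o * Amat o = 1 := by
  ext i j
  simp only [Matrix.mul_apply, Amat, Bmat, Matrix.of_apply, ite_mul, zero_mul, mul_ite,
    mul_one, mul_zero]
  by_cases hij : i = j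
  · subst hij
    have hm := (orbMass_pos π o hπ ho i).ne'
    rw [Matrix.one_apply_eq]
    calc ∑ y, (if o y = i then (if o y = i then (π y / orbMass π o i : ℝ) else 0) else 0)
        = ∑ y, (if o y = i then (π y / orbMass π o i : ℝ) else 0) := by
          apply Finset.sum_congr rfl; intro y _
          by_cases h : o y = i <;> simp [h]
      _ = (∑ y ∈ Finset.filter (fun y => o y = i) Finset.univ, π y) / orbMass π o i := by
          rw [Finset.sum_div, Finset.sum_filter]
      _ = 1 := by rw [← orbMass]; exact div_self hm
  · rw [Matrix.one_apply_ne hij]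
    apply Finset.sum_eq_zero; intro y _
    by_cases h2 : o y = j
    · rw [if_pos h2, if_neg fun h1 => hij (h1.symm.trans h2)]
    · exact if_neg h2

lemma projChain_eq [Fintype X] {k : ℕ} (π : X → ℝ) (o : X → Fin k) (P : Matrix X X ℝ) :
    projChain π o P = Bmat π o * P * Amat o := by
  ext i j
  simp only [projChain, Matrix.of_apply, Matrix.mul_apply, Amat, Bmat, mul_ite, mul_one,
    mul_zero, ite_mul, zero_mul, Finset.mul_sum, ← Finset.sum_filter]
  rw [Finset.sum_comm]
  refine Finset.sum_congr rfl fun y _ => Finset.sum_congr rfl fun x _ => ?_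
  ring

lemma pimat_eq [Fintype X] {k : ℕ} (π : X → ℝ) (o : X → Fin k)
    (hπ : ∀ x, 0 < π x) (ho : Function.Surjective o) :
    Pimat π = Amat o * Pimat (orbMass π o) * Bmat π o := by
  ext x y
  simp only [Matrix.mul_apply, Amat, Bmat, Pimat, Matrix.of_apply, ite_mul, one_mul, zero_mul,
    mul_ite, mul_zero, Finset.sum_ite_eq, Finset.mem_univ, if_true]
  rw [mul_comm, div_mul_cancel₀ _ (orbMass_pos π o hπ ho (o y)).ne']

lemma gpg_pow [Fintype X] [DecidableEq X] {k : ℕ} (π : X → ℝ) (o : X → Fin k)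
    (hπ : ∀ x, 0 < π x) (ho : Function.Surjective o) (P : Matrix X X ℝ) (l : ℕ) (hl : 0 < l) :
    (gibbs π o * P * gibbs π o) ^ l
      = Amat o * (Bmat π o * P * Amat o) ^ l * Bmat π o := by
  induction l with
  | zero => exact absurd hl (lt_irrefl 0)
  | succ n ih =>
    rcases Nat.eq_zero_or_pos n with hn | hn
    · subst hn
      rw [zero_add, pow_one, pow_one, gibbs_eq_AB π o]
      simp only [Matrix.mul_assoc]
    · rw [pow_succ, pow_succ, ih hn, gibbs_eq_AB π o]
      have hba := BA_eq_one π o hπ ho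
      calc Amat o * (Bmat π o * P * Amat o) ^ n * Bmat π o * (Amat o * Bmat π o * P * (Amat o * Bmat π o))
          = Amat o * (Bmat π o * P * Amat o) ^ n * ((Bmat π o * Amat o) * (Bmat π o * P * Amat o)) * Bmat π o := by
            simp only [Matrix.mul_assoc]
        _ = Amat o * ((Bmat π o * P * Amat o) ^ n * (Bmat π o * P * Amat o)) * Bmat π o := by
            rw [hba, Matrix.one_mul]; simp only [Matrix.mul_assoc]

/-- group a π-weighted sum over fibers of o. -/
lemma sum_orb [Fintype X] {k : ℕ} (π : X → ℝ) (o : X → Fin k) (h : Fin k → ℝ) :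
    ∑ x, π x * h (o x) = ∑ i, orbMass π o i * h i := by
  rw [← Finset.sum_fiberwise Finset.univ o (fun x => π x * h (o x))]
  apply Finset.sum_congr rfl; intro i _
  rw [orbMass, Finset.sum_mul]
  apply Finset.sum_congr rfl; intro x hx
  rw [(Finset.mem_filter.mp hx).2]

lemma frobSq_conj [Fintype X] {k : ℕ} (π : X → ℝ) (o : X → Fin k)
    (hπ : ∀ x, 0 < π x) (ho : Function.Surjective o) (N : Matrix (Fin k) (Fin k) ℝ) :
    frobSq π (Amat o * N * Bmat π o) = frobSq (orbMass π o) N := by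
  have hm : ∀ i, (0:ℝ) < orbMass π o i := orbMass_pos π o hπ ho
  have hent : ∀ y x, (Amat o * N * Bmat π o) y x
      = N (o y) (o x) * (π x / orbMass π o (o x)) := by
    intro y x
    simp only [Matrix.mul_apply, Amat, Bmat, Matrix.of_apply, ite_mul, one_mul, zero_mul,
      mul_ite, mul_zero, Finset.sum_ite_eq, Finset.mem_univ, if_true]
  simp only [frobSq, Matrix.trace, Matrix.diag, Matrix.mul_apply, piAdj, Matrix.of_apply]
  calc ∑ x, ∑ y, π y * (Amat o * N * Bmat π o) y x / π x * (Amat o * N * Bmat π o) y x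
      = ∑ x, π x * (∑ y, π y * ((N (o y) (o x))^2 / (orbMass π o (o x))^2)) := by
        apply Finset.sum_congr rfl; intro x _
        rw [Finset.mul_sum]
        apply Finset.sum_congr rfl; intro y _
        rw [hent]
        have hx := (hπ x).ne'
        have hmx := (hm (o x)).ne'
        field_simp
    _ = ∑ i, orbMass π o i * (∑ y, π y * ((N (o y) i)^2 / (orbMass π o i)^2)) :=
        sum_orb π o (fun i => ∑ y, π y * ((N (o y) i)^2 / (orbMass π o i)^2))
    _ = ∑ i, ∑ y, π y * (orbMass π o i * ((N (o y) i)^2 / (orbMass π o i)^2)) := by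
        apply Finset.sum_congr rfl; intro i _
        rw [Finset.mul_sum]
        apply Finset.sum_congr rfl; intro y _; ring
    _ = ∑ i, ∑ j, orbMass π o j * (orbMass π o i * ((N j i)^2 / (orbMass π o i)^2)) := by
        apply Finset.sum_congr rfl; intro i _
        exact sum_orb π o (fun j => orbMass π o i * ((N j i)^2 / (orbMass π o i)^2))
    _ = ∑ i, ∑ j, orbMass π o j * N j i / orbMass π o i * N j i := by
        apply Finset.sum_congr rfl; intro i _
        apply Finset.sum_congr rfl; intro j _
        have := (hm i).ne'
        field_simp

/-- Tr((GPG)^l) = Tr(P̄^l) and ‖(GPG)^l − Π‖²_{F,π} = ‖P̄^l − Π̄‖²_{F,π̄}. -/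
theorem stmt6 [Fintype X] [DecidableEq X] {k : ℕ} (π : X → ℝ) (o : X → Fin k)
    (hπ : ∀ x, 0 < π x) (hsum : ∑ x, π x = 1) (ho : Function.Surjective o)
    (P : Matrix X X ℝ) (hP : IsReversible π P) (l : ℕ) (hl : 0 < l) :
    Matrix.trace ((gibbs π o * P * gibbs π o) ^ l)
      = Matrix.trace ((projChain π o P) ^ l) ∧
    frobSq π ((gibbs π o * P * gibbs π o) ^ l - Pimat π)
      = frobSq (orbMass π o) ((projChain π o P) ^ l - Pimat (orbMass π o)) := by
  have hpow := gpg_pow π o hπ ho P l hl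
  have hproj := projChain_eq π o P
  constructor
  · rw [hpow, hproj, Matrix.trace_mul_comm, ← Matrix.mul_assoc,
      BA_eq_one π o hπ ho, Matrix.one_mul]
  · rw [hpow, hproj, pimat_eq π o hπ ho, ← Matrix.sub_mul, ← Matrix.mul_sub]
    exact frobSq_conj π o hπ ho _

end
end GpgStmt
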